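/- arXiv:1402.1951 — 6 statements merged into one kernel-verified Lean document; each statement's English description precedes it below -/
import Mathlib

section
/- Let R be a Noetherian domain of finite type over a perfect field C of characteristic p > 0. Then the p-normalization R' of R (the set of elements of Frac(R) some p-power of which lies in R) is a C-algebra of finite type. -/
/-!
Let `C` be perfect and `R = C[s₁, …, sₙ]`. In a perfect closure `L` of `K`, every `p`-th root of
an element of `R` lies in `R[s₁^{1/p}, …, sₙ^{1/p}]` (the coefficients stay in `C = C^p`), a
finite `R`-module; as `R` is Noetherian, its intersection with `K` is finite, so a single
`c ≠ 0` satisfies `c α ∈ R` whenever `α ^ p ∈ R`. Since `(c α) ^ p = c ^ (p - 2) · c² α ^ p`,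
induction on `m` shows that `c² α ∈ R` whenever `α ^ p ^ m ∈ R`. Hence `R'` is a fractional
ideal of the Noetherian domain `R`, so a finite `R`-module and a `C`-algebra of finite type.
-/

open nonZeroDivisors

theorem pow_pow_mem_of_le {M S : Type*} [Monoid M] [SetLike S M] [SubmonoidClass S M] {s : S}
    {x : M} {p m n : ℕ} (hmn : m ≤ n) (hx : x ^ p ^ m ∈ s) : x ^ p ^ n ∈ s := by
  rw [← Nat.add_sub_cancel' hmn, pow_add, pow_mul]
  exact pow_mem hx _

section PNormalization

variable (R K : Type*) [CommRing R] [CommRing K] [Algebra R K] (p : ℕ) [ExpChar K p]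

def pNormalization : Subalgebra R K where
  carrier := {α | ∃ m : ℕ, α ^ p ^ m ∈ (algebraMap R K).range}
  mul_mem' := by
    rintro x y ⟨m, hx⟩ ⟨n, hy⟩
    refine ⟨max m n, ?_⟩
    rw [mul_pow]
    exact mul_mem (pow_pow_mem_of_le (le_max_left m n) hx)
      (pow_pow_mem_of_le (le_max_right m n) hy)
  add_mem' := by
    rintro x y ⟨m, hx⟩ ⟨n, hy⟩
    refine ⟨max m n, ?_⟩
    rw [add_pow_expChar_pow]
    exact add_mem (pow_pow_mem_of_le (le_max_left m n) hx)
      (pow_pow_mem_of_le (le_max_right m n) hy)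
  algebraMap_mem' r := ⟨0, by simp⟩

end PNormalization

theorem sq_mul_mem_of_pow_pow_mem {A S : Type*} [CommSemiring A] [SetLike S A]
    [SubsemiringClass S A] {s : S} {p : ℕ} (hp : 2 ≤ p) {c : A} (hcs : c ∈ s)
    (hc : ∀ α : A, α ^ p ∈ s → c * α ∈ s) (m : ℕ) :
    ∀ α : A, α ^ p ^ m ∈ s → c ^ 2 * α ∈ s := by
  induction m with
  | zero => exact fun α hα ↦ mul_mem (pow_mem hcs 2) (by simpa using hα)
  | succ m ih =>
    intro α hα
    have hαp : c ^ 2 * α ^ p ∈ s := ih (α ^ p) (by rwa [← pow_mul, ← pow_succ'])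
    have hcα : (c * α) ^ p = c ^ (p - 2) * (c ^ 2 * α ^ p) := by
      rw [mul_pow, ← mul_assoc, ← pow_add, Nat.sub_add_cancel hp]
    rw [sq, mul_assoc]
    exact hc _ (hcα ▸ mul_mem (pow_mem hcs _) hαp)

theorem isFractional_pNormalization {R K : Type*} [CommRing R] [CommRing K] [Algebra R K]
    {p : ℕ} [ExpChar K p] (hp : 2 ≤ p) {c : R} (hc0 : c ∈ R⁰)
    (hc : ∀ α : K, α ^ p ∈ (algebraMap R K).range →
      algebraMap R K c * α ∈ (algebraMap R K).range) :
    IsFractional R⁰ (Subalgebra.toSubmodule (pNormalization R K p)) := by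
  refine ⟨c ^ 2, pow_mem hc0 2, fun α ⟨m, hm⟩ ↦ ?_⟩
  rw [IsLocalization.IsInteger, Algebra.smul_def, map_pow]
  exact sq_mul_mem_of_pow_pow_mem hp (RingHom.mem_range_self _ c) hc m α hm

theorem frobeniusEquiv_symm_algebraMap_mem_adjoin (C : Type*) {R L : Type*} [CommRing C]
    [CommRing R] [CommRing L] [Algebra C R] [Algebra R L] [Algebra C L] [IsScalarTower C R L]
    (p : ℕ) [ExpChar C p] [PerfectRing C p] [ExpChar L p] [PerfectRing L p] {s : Set R}
    (hs : Algebra.adjoin C s = ⊤) (r : R) :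
    (frobeniusEquiv L p).symm (algebraMap R L r) ∈
      Algebra.adjoin R ((fun x ↦ (frobeniusEquiv L p).symm (algebraMap R L x)) '' s) := by
  let f : R →+* L := (frobeniusEquiv L p).symm.toRingHom.comp (algebraMap R L)
  change f r ∈ (Algebra.adjoin R (f '' s)).toSubring
  suffices (Algebra.adjoin C s).toSubring ≤ (Algebra.adjoin R (f '' s)).toSubring.comap f from
    this (by simp [hs])
  rw [Algebra.adjoin_eq_ring_closure, Subring.closure_le]
  rintro _ (⟨c, rfl⟩ | hx)
  · have : f (algebraMap C R c) =
        algebraMap R L (algebraMap C R ((frobeniusEquiv C p).symm c)) := by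
      simp only [f, RingHom.comp_apply, ← IsScalarTower.algebraMap_apply,
        RingHom.map_frobeniusEquiv_symm]
      rfl
    rw [SetLike.mem_coe, Subring.mem_comap, this]
    exact Subalgebra.algebraMap_mem _ _
  · exact Algebra.subset_adjoin (Set.mem_image_of_mem f hx)

theorem exists_mem_nonZeroDivisors_isInteger_of_fg (R : Type*) {K L : Type*} [CommRing R]
    [IsNoetherianRing R] [Field K] [CommRing L] [Nontrivial L] [Algebra R K]
    [IsFractionRing R K] [Algebra R L] [Algebra K L] [IsScalarTower R K L] {M : Submodule R L}
    (hM : M.FG) :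
    ∃ c ∈ R⁰, ∀ α : K, algebraMap K L α ∈ M → IsLocalization.IsInteger R (c • α) := by
  let f := (IsScalarTower.toAlgHom R K L).toLinearMap
  have : IsNoetherian R M := isNoetherian_of_fg_of_noetherian M hM
  have hfg : (M.comap f).FG :=
    Submodule.fg_of_fg_map_injective f (algebraMap K L).injective
      (Submodule.FG.of_le_of_isNoetherian (Submodule.map_comap_le f M))
  exact FractionalIdeal.isFractional_of_fg hfg

theorem exists_mem_nonZeroDivisors_mul_mem_of_pow_mem (C R K : Type*) [Field C] [CommRing R]
    [Algebra C R] (p : ℕ) [Fact p.Prime] [CharP C p] [PerfectRing C p] [Algebra.FiniteType C R]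
    [IsNoetherianRing R] [Field K] [Algebra R K] [IsFractionRing R K] [Algebra C K]
    [IsScalarTower C R K] :
    ∃ c ∈ R⁰, ∀ α : K, α ^ p ∈ (algebraMap R K).range →
      algebraMap R K c * α ∈ (algebraMap R K).range := by
  have : CharP K p := charP_of_injective_algebraMap (algebraMap C K).injective p
  let L := PerfectClosure K p
  let : Algebra K L := (PerfectClosure.of K p).toAlgebra
  let : Algebra R L := ((algebraMap K L).comp (algebraMap R K)).toAlgebra
  let : Algebra C L := ((algebraMap K L).comp (algebraMap C K)).toAlgebra
  have : IsScalarTower R K L := .of_algebraMap_eq fun _ ↦ rfl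
  have : IsScalarTower C R L := .of_algebraMap_eq fun x ↦ by
    simp [RingHom.algebraMap_toAlgebra, ← IsScalarTower.algebraMap_apply C R K]
  let ψ := (frobeniusEquiv L p).symm
  obtain ⟨s, hs⟩ := Algebra.FiniteType.out (R := C) (A := R)
  let t := (fun x ↦ ψ (algebraMap R L x)) '' (s : Set R)
  have ht : ∀ x ∈ t, IsIntegral R x := by
    rintro _ ⟨r, -, rfl⟩
    refine IsIntegral.of_pow (Fact.out : p.Prime).pos ?_
    rw [frobeniusEquiv_symm_pow_p]
    exact isIntegral_algebraMap
  obtain ⟨c, hc0, hc⟩ := exists_mem_nonZeroDivisors_isInteger_of_fg R (K := K)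
    (fg_adjoin_of_finite (s.finite_toSet.image _) ht)
  refine ⟨c, hc0, ?_⟩
  rintro α ⟨r, hr⟩
  have hα : algebraMap K L α = ψ (algebraMap R L r) := by
    rw [IsScalarTower.algebraMap_apply R K L, hr, map_pow, frobeniusEquiv_symm_pow]
  obtain ⟨r', hr'⟩ := hc α (hα ▸ frobeniusEquiv_symm_algebraMap_mem_adjoin C p hs r)
  exact ⟨r', by rw [hr', Algebra.smul_def]⟩

theorem Subalgebra.FG.restrictScalars_of_finiteType {C R A : Type*} [CommRing C] [CommRing R]
    [CommRing A] [Algebra C R] [Algebra R A] [Algebra C A] [IsScalarTower C R A]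
    [Algebra.FiniteType C R] {S : Subalgebra R A} (hS : S.FG) : (S.restrictScalars C).FG := by
  have : Algebra.FiniteType R S := S.fg_iff_finiteType.1 hS
  have : Algebra.FiniteType C S := .trans (S := R) inferInstance this
  exact (Subalgebra.fg_iff_finiteType _).2 this

/-- Let `R` be a Noetherian domain of finite type over a perfect field `C` of
characteristic `p > 0`, with fraction field `K`.  Then the `p`-normalization
`R' = { α ∈ K : α^(p^m) ∈ R for some m }` of `R` is a `C`-algebra of finite type, i.e. it is
the `C`-subalgebra of `K` generated by finitely many elements. -/
theorem stmt7 (C R K : Type*) [Field C] [CommRing R] [IsDomain R] [Algebra C R]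
    (p : ℕ) [Fact p.Prime] [CharP C p] [PerfectRing C p]
    [Algebra.FiniteType C R] [IsNoetherianRing R]
    [Field K] [Algebra R K] [IsFractionRing R K] [Algebra C K] [IsScalarTower C R K] :
    ∃ s : Finset K,
      (Algebra.adjoin C (s : Set K) : Set K) =
        {α : K | ∃ m : ℕ, α ^ p ^ m ∈ (algebraMap R K).range} := by
  have : CharP K p := charP_of_injective_algebraMap (algebraMap C K).injective p
  obtain ⟨c, hc0, hc⟩ := exists_mem_nonZeroDivisors_mul_mem_of_pow_mem C R K p
  have hfrac := isFractional_pNormalization (Fact.out : p.Prime).two_le hc0 hc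
  have hfg : (pNormalization R K p).FG :=
    Subalgebra.fg_of_fg_toSubmodule (FractionalIdeal.fg_of_isNoetherianRing le_rfl ⟨_, hfrac⟩)
  obtain ⟨s, hs⟩ := hfg.restrictScalars_of_finiteType (C := C)
  exact ⟨s, by rw [hs]; rfl⟩
end

section
/- Let f : T → R be a C-algebra homomorphism between integral domains over a perfect field C of characteristic p > 0, with R p-normal and K = Frac(R). Then the induced map on Kähler differentials f_* : Ω_T → Ω_K is zero if and only if f(T) ⊆ R^p. -/
/-!
Let `K = Frac R`. If `x ∈ K` is not a `p`-th power, Zorn's lemma gives an intermediate field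
`M ⊇ K^p` (which contains `C`, as `C` is perfect) maximal with `x ∉ M`. For `y ∉ M`, maximality
forces `x ∈ M(y)`, and `M(x) = M(y)` because both have degree `p` over `M`; hence
`K = M(x) ≅ M[X]/(X^p - x^p)`. Since `d/dX` kills `X^p - x^p`, it descends to a `C`-derivation
`D` of `K` with `D x = 1`, so `dx ≠ 0` in `Ω_{K/C}`. Conversely `d(r^p) = p r^{p-1} dr = 0`, and
`p`-normality (with `m = 1`) brings a `p`-th root in `K` of an element of `R` back into `R`.
-/

open Polynomial IntermediateField

section AdjoinPthRoot

variable {F L : Type*} [Field F] [Field L] [Algebra F L] {p : ℕ} [Fact p.Prime] {x : L}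

theorem isIntegral_of_pow_mem_range {n : ℕ} (hn : 0 < n)
    (hx : x ^ n ∈ (algebraMap F L).range) : IsIntegral F x := by
  obtain ⟨c, hc⟩ := hx
  exact (hc ▸ isIntegral_algebraMap).of_pow hn

variable [CharP F p]

theorem minpoly_eq_X_pow_sub_C_of_notMem_range {c : F} (hc : algebraMap F L c = x ^ p)
    (hx : x ∉ (algebraMap F L).range) : minpoly F x = X ^ p - C c := by
  have : CharP L p := charP_of_injective_algebraMap (algebraMap F L).injective p
  have hp := (Fact.out : p.Prime).ne_zero
  refine (minpoly.eq_of_irreducible_of_monic ?_ (by simp [hc]) (monic_X_pow_sub_C c hp)).symm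
  refine X_pow_sub_C_irreducible_of_prime Fact.out fun b hb => hx ⟨b, frobenius_inj L p ?_⟩
  simp [frobenius_def, ← map_pow, hb, hc]

theorem finrank_adjoin_simple_of_pow_mem_range (hxp : x ^ p ∈ (algebraMap F L).range)
    (hx : x ∉ (algebraMap F L).range) : Module.finrank F F⟮x⟯ = p := by
  rw [adjoin.finrank (isIntegral_of_pow_mem_range (Fact.out : p.Prime).pos hxp)]
  obtain ⟨c, hc⟩ := hxp
  rw [minpoly_eq_X_pow_sub_C_of_notMem_range hc hx, natDegree_X_pow_sub_C]

theorem adjoin_simple_eq_of_mem_adjoin_simple {y : L} (hxp : x ^ p ∈ (algebraMap F L).range)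
    (hx : x ∉ (algebraMap F L).range) (hyp : y ^ p ∈ (algebraMap F L).range)
    (hy : y ∉ (algebraMap F L).range) (hxy : x ∈ F⟮y⟯) : F⟮x⟯ = F⟮y⟯ :=
  have : FiniteDimensional F F⟮y⟯ :=
    adjoin.finiteDimensional (isIntegral_of_pow_mem_range (Fact.out : p.Prime).pos hyp)
  eq_of_le_of_finrank_eq (adjoin_simple_le_iff.mpr hxy) <| by
    rw [finrank_adjoin_simple_of_pow_mem_range hxp hx,
      finrank_adjoin_simple_of_pow_mem_range hyp hy]

theorem exists_derivation_apply_eq_one (hxp : x ^ p ∈ (algebraMap F L).range)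
    (hx : x ∉ (algebraMap F L).range) (htop : F⟮x⟯ = ⊤) : ∃ D : Derivation F L L, D x = 1 := by
  have hsurj : Function.Surjective (aeval (R := F) x) := by
    rw [← AlgHom.range_eq_top, ← Algebra.adjoin_singleton_eq_range_aeval,
      ← adjoin_simple_eq_top_iff_of_isAlgebraic
        (isIntegral_of_pow_mem_range (Fact.out : p.Prime).pos hxp).isAlgebraic]
    exact htop
  obtain ⟨c, hc⟩ := hxp
  have hker : ∀ q : F[X], aeval x q = 0 → aeval x (derivative q) = 0 := by
    intro q hq
    obtain ⟨r, rfl⟩ := minpoly_eq_X_pow_sub_C_of_notMem_range hc hx ▸ minpoly.dvd F x hq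
    have hderiv : derivative (X ^ p - C c) = 0 := by simp [derivative_X_pow]
    simp [hderiv, hc]
  exact ⟨Derivation.liftOfSurjective hsurj (d := derivative') hker, by
    simpa using Derivation.liftOfSurjective_apply hsurj (d := derivative') hker X⟩

end AdjoinPthRoot

section MaximalIntermediateField

variable {C K : Type*} [Field C] [Field K] [Algebra C K] {p : ℕ} [Fact p.Prime] [CharP C p]

theorem adjoin_simple_eq_top_of_maximal {M : IntermediateField C K} {x : K}
    (hM : Maximal (fun N : IntermediateField C K => (∀ a : K, a ^ p ∈ N) ∧ x ∉ N) M) :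
    M⟮x⟯ = ⊤ := by
  have : CharP M p := charP_of_injective_algebraMap (algebraMap C M).injective p
  have hrange {y : K} (hy : y ∉ M) :
      y ^ p ∈ (algebraMap M K).range ∧ y ∉ (algebraMap M K).range :=
    ⟨⟨⟨y ^ p, hM.prop.1 y⟩, rfl⟩, fun ⟨a, ha⟩ => hy (ha ▸ a.2)⟩
  refine eq_top_iff.mpr fun y _ => ?_
  by_cases hy : y ∈ M
  · exact IntermediateField.algebraMap_mem _ (⟨y, hy⟩ : M)
  have hxy : x ∈ M⟮y⟯ := by
    by_contra hxy
    have hle : M ≤ restrictScalars C M⟮y⟯ := fun a ha =>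
      IntermediateField.algebraMap_mem M⟮y⟯ (⟨a, ha⟩ : M)
    exact hy (hM.le_of_ge ⟨fun a => hle (hM.prop.1 a), hxy⟩ hle (mem_adjoin_simple_self M y))
  rw [adjoin_simple_eq_of_mem_adjoin_simple (hrange hM.prop.2).1 (hrange hM.prop.2).2
    (hrange hy).1 (hrange hy).2 hxy]
  exact mem_adjoin_simple_self M y

theorem exists_maximal_intermediateField_pow_mem_notMem [PerfectRing C p] {x : K}
    (hx : ∀ a : K, a ^ p ≠ x) :
    ∃ M : IntermediateField C K, Maximal (fun N => (∀ a : K, a ^ p ∈ N) ∧ x ∉ N) M := by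
  have : CharP K p := charP_of_injective_algebraMap (algebraMap C K).injective p
  let S : Set (IntermediateField C K) := {N | (∀ a : K, a ^ p ∈ N) ∧ x ∉ N}
  have hS : (frobenius K p).fieldRange.toIntermediateField (K := C) (fun c => by
      obtain ⟨b, rfl⟩ := surjective_frobenius C p c
      exact ⟨algebraMap C K b, by simp [frobenius_def]⟩) ∈ S :=
    ⟨fun a => ⟨a, rfl⟩, fun ⟨a, ha⟩ => hx a ha⟩
  have hchain : ∀ c ⊆ S, IsChain (· ≤ ·) c → ∀ M ∈ c, ∃ ub ∈ S, ∀ N ∈ c, N ≤ ub := by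
    intro c hcS hc M hM
    have : Nonempty c := ⟨⟨M, hM⟩⟩
    refine ⟨⨆ N : c, N.1, ⟨fun a => le_iSup (fun N : c => N.1) ⟨M, hM⟩ ((hcS hM).1 a), ?_⟩,
      fun N hN => le_iSup (fun N : c => N.1) ⟨N, hN⟩⟩
    rw [← SetLike.mem_coe, coe_iSup_of_directed hc.directed, Set.mem_iUnion]
    rintro ⟨N, hxN⟩
    exact (hcS N.2).2 hxN
  obtain ⟨M, -, hM⟩ := zorn_le_nonempty₀ S hchain _ hS
  exact ⟨M, hM⟩

variable (p) in
theorem KaehlerDifferential.D_eq_zero_iff_exists_pow_eq [PerfectRing C p] (x : K) :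
    KaehlerDifferential.D C K x = 0 ↔ ∃ a, a ^ p = x := by
  have : CharP K p := charP_of_injective_algebraMap (algebraMap C K).injective p
  refine ⟨fun hx => ?_, ?_⟩
  · by_contra! hp
    obtain ⟨M, hM⟩ := exists_maximal_intermediateField_pow_mem_notMem (C := C) hp
    have : CharP M p := charP_of_injective_algebraMap (algebraMap C M).injective p
    obtain ⟨D, hD⟩ := exists_derivation_apply_eq_one (F := M) ⟨⟨x ^ p, hM.prop.1 x⟩, rfl⟩
      (fun ⟨a, ha⟩ => hM.prop.2 (ha ▸ a.2)) (adjoin_simple_eq_top_of_maximal hM)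
    have := congrArg (D.restrictScalars C).liftKaehlerDifferential hx
    rw [Derivation.liftKaehlerDifferential_comp_D, map_zero, Derivation.restrictScalars_apply,
      hD] at this
    exact one_ne_zero this
  · rintro ⟨a, rfl⟩
    rw [Derivation.leibniz_pow, ← Nat.cast_smul_eq_nsmul K, CharP.cast_eq_zero, zero_smul]

end MaximalIntermediateField

/-- A domain `R` (in characteristic `p`) is *p-normal* if every element `α` of its fraction
field with `α ^ (p ^ m) ∈ R` for some `m` already lies in `R`. -/
def IsPNormal (p : ℕ) (R : Type*) [CommRing R] [IsDomain R] : Prop :=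
  ∀ α : FractionRing R,
    (∃ m : ℕ, α ^ p ^ m ∈ (algebraMap R (FractionRing R)).range) →
      α ∈ (algebraMap R (FractionRing R)).range

theorem stmt8_general (C T R : Type*) [Field C] [CommRing T] [Algebra C T]
    [CommRing R] [IsDomain R] [Algebra C R]
    (p : ℕ) [Fact p.Prime] [CharP C p] [PerfectRing C p]
    (hR : IsPNormal p R) (f : T →ₐ[C] R) :
    (∀ t : T,
        KaehlerDifferential.D C (FractionRing R) (algebraMap R (FractionRing R) (f t)) = 0)
      ↔ ∀ t : T, ∃ r : R, f t = r ^ p := by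
  simp only [KaehlerDifferential.D_eq_zero_iff_exists_pow_eq p]
  refine forall_congr' fun t =>
    ⟨fun ⟨a, ha⟩ => ?_, fun ⟨r, hr⟩ => ⟨algebraMap R _ r, by rw [hr, map_pow]⟩⟩
  obtain ⟨r, rfl⟩ := hR a ⟨1, by rw [pow_one, ha]; exact ⟨f t, rfl⟩⟩
  exact ⟨r, IsFractionRing.injective R (FractionRing R) (by rw [map_pow, ha])⟩

/-- Let `f : T → R` be a `C`-algebra homomorphism between integral domains
over a perfect field `C` of characteristic `p > 0`, with `R` `p`-normal and `K = Frac(R)`.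
Then the induced map `f_* : Ω_T → Ω_K` on Kähler differentials is zero (equivalently, since
`Ω_T` is generated by the differentials `d t`, the differential of `f t` vanishes in `Ω_K` for
all `t`) if and only if `f(T) ⊆ R^p`. -/
theorem stmt8 (C T R : Type*) [Field C] [CommRing T] [IsDomain T] [Algebra C T]
    [CommRing R] [IsDomain R] [Algebra C R]
    (p : ℕ) [Fact p.Prime] [CharP C p] [PerfectRing C p]
    (hR : IsPNormal p R) (f : T →ₐ[C] R) :
    (∀ t : T,
        KaehlerDifferential.D C (FractionRing R) (algebraMap R (FractionRing R) (f t)) = 0)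
      ↔ ∀ t : T, ∃ r : R, f t = r ^ p :=
  stmt8_general C T R p hR f
end

section
/- Let R be an affine domain over a perfect field C of characteristic p > 0 and P an ideal of R with R/P = C. Then there exists an ideal P' of the p-normalization R' with P' ∩ R = P and R'/P' = C. -/
/-!
The inclusion `R → R'` is `p`-radical: it is injective and every element of `R'` has a
`p ^ m`-th power in `R`. The `C`-point `π : R → C` with kernel `P` therefore extends to `R'`,
sending `α` to the unique `p ^ m`-th root in the perfect field `C` of `π (α ^ p ^ m)`
(`PerfectRing.lift`). The kernel of the extension lies over `P`, and `R'` modulo it is `C`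
because the extension is a `C`-algebra map onto `C`.
-/

theorem IsPRadical.of_injective {A B : Type*} [CommRing A] [CommRing B] {i : A →+* B} {p : ℕ}
    (hi : Function.Injective i) (hpow : ∀ x : B, ∃ n : ℕ, x ^ p ^ n ∈ i.range) :
    IsPRadical i p where
  pow_mem' x := by
    obtain ⟨n, y, hy⟩ := hpow x
    exact ⟨n, y, hy⟩
  ker_le' := by
    rw [(RingHom.injective_iff_ker_eq_bot i).mp hi]
    exact bot_le

namespace PerfectRing

variable {C A B : Type*} [CommRing C] [CommRing A] [CommRing B] [Algebra C A] [Algebra C B]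
  (p : ℕ) [ExpChar C p] [PerfectRing C p] [ExpChar A p] [ExpChar B p]
  (ρ : A →ₐ[C] B) [IsPRadical (ρ : A →+* B) p] (π : A →ₐ[C] C)

noncomputable def liftAlgHom : B →ₐ[C] C :=
  { lift (ρ : A →+* B) (π : A →+* C) p with
    commutes' c := by
      change lift _ _ p (algebraMap C B c) = algebraMap C C c
      rw [← ρ.commutes c, ← π.commutes c]
      exact lift_comp_apply _ _ p _ }

theorem liftAlgHom_comp : (liftAlgHom p ρ π).comp ρ = π :=
  AlgHom.ext fun a ↦ lift_comp_apply (ρ : A →+* B) (π : A →+* C) p a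

end PerfectRing

theorem Ideal.exists_algHom_ker_eq {C A : Type*} [CommRing C] [CommRing A] [Algebra C A]
    (P : Ideal A) (hP : Function.Bijective (algebraMap C (A ⧸ P))) :
    ∃ π : A →ₐ[C] C, RingHom.ker π = P := by
  let e := AlgEquiv.ofBijective (Algebra.ofId C (A ⧸ P)) hP
  refine ⟨(e.symm : (A ⧸ P) →ₐ[C] C).comp (Ideal.Quotient.mkₐ C P), ?_⟩
  change RingHom.ker ((e.symm : (A ⧸ P) →+* C).comp (Ideal.Quotient.mk P)) = P
  rw [RingHom.ker_comp_of_injective _ e.symm.injective, Ideal.mk_ker]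

theorem AlgHom.bijective_algebraMap_quotient_ker {C A : Type*} [CommRing C] [CommRing A]
    [Algebra C A] (f : A →ₐ[C] C) : Function.Bijective (algebraMap C (A ⧸ RingHom.ker f)) := by
  let e := Ideal.quotientKerAlgEquivOfSurjective (f := f)
    fun c ↦ ⟨algebraMap C A c, f.commutes c⟩
  convert e.symm.bijective
  ext c
  exact (e.symm.commutes c).symm

theorem stmt9_general (C R K : Type*) [Field C] [CommRing R] [IsDomain R] [Algebra C R]
    (p : ℕ) [Fact p.Prime] [CharP C p] [PerfectRing C p]
    [Field K] [Algebra R K] [IsFractionRing R K] [Algebra C K] [IsScalarTower C R K]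
    (P : Ideal R) (hP : Function.Bijective (algebraMap C (R ⧸ P)))
    (R' : Subalgebra C K)
    (hR' : (R' : Set K) = {α : K | ∃ m : ℕ, α ^ p ^ m ∈ (algebraMap R K).range})
    (ρ : R →+* R') (hρ : ∀ r : R, (ρ r : K) = algebraMap R K r) :
    ∃ P' : Ideal R',
      Ideal.comap ρ P' = P ∧ Function.Bijective (algebraMap C (R' ⧸ P')) := by
  have : CharP R p := charP_of_injective_algebraMap' C p
  have : CharP R' p := charP_of_injective_algebraMap' C p
  let ρₐ : R →ₐ[C] R' :=
    { ρ with
      commutes' c := Subtype.ext <| by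
        simp [hρ, IsScalarTower.algebraMap_apply C R K] }
  have hρ_inj : Function.Injective ρ := fun r s h ↦
    IsFractionRing.injective R K <| by rw [← hρ, ← hρ, h]
  have : IsPRadical (ρₐ : R →+* R') p := IsPRadical.of_injective hρ_inj fun α ↦ by
    obtain ⟨m, r, hr⟩ : (α : K) ∈ {α : K | ∃ m : ℕ, α ^ p ^ m ∈ (algebraMap R K).range} :=
      hR' ▸ α.2
    exact ⟨m, r, Subtype.ext <| by simp [ρₐ, hρ, hr]⟩
  obtain ⟨π, hπ⟩ := P.exists_algHom_ker_eq hP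
  let φ := PerfectRing.liftAlgHom p ρₐ π
  refine ⟨RingHom.ker φ, ?_, φ.bijective_algebraMap_quotient_ker⟩
  rw [← hπ, ← PerfectRing.liftAlgHom_comp p ρₐ π]
  exact RingHom.comap_ker (φ : R' →+* C) ρ

/-- Let `R` be an affine domain over a perfect field `C` of characteristic
`p > 0`, with fraction field `K`, and `P` an ideal of `R` with `R/P = C`.  Let `R'` be the
`p`-normalization of `R` inside `K` (a subalgebra whose underlying set is the set of elements
some `p`-power of which lies in `R`), and `ρ : R → R'` the canonical map.  Then there exists an
ideal `P'` of `R'` with `P' ∩ R = P` and `R'/P' = C`. -/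
theorem stmt9 (C R K : Type*) [Field C] [CommRing R] [IsDomain R] [Algebra C R]
    (p : ℕ) [Fact p.Prime] [CharP C p] [PerfectRing C p]
    [Algebra.FiniteType C R]
    [Field K] [Algebra R K] [IsFractionRing R K] [Algebra C K] [IsScalarTower C R K]
    (P : Ideal R) (hP : Function.Bijective (algebraMap C (R ⧸ P)))
    (R' : Subalgebra C K)
    (hR' : (R' : Set K) = {α : K | ∃ m : ℕ, α ^ p ^ m ∈ (algebraMap R K).range})
    (ρ : R →+* R') (hρ : ∀ r : R, (ρ r : K) = algebraMap R K r) :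
    ∃ P' : Ideal R',
      Ideal.comap ρ P' = P ∧ Function.Bijective (algebraMap C (R' ⧸ P')) :=
  stmt9_general C R K p P hP R' hR' ρ hρ
end

section
/- Let F, G : H → S be local C-algebra homomorphisms from a commutative complete Hopf algebra H over a perfect field C of characteristic p > 0 to a complete local C-algebra S with residue field C. If (F − G)(H) ⊆ S^{p^m} for some m ≥ 1 (where − denotes the group operation on such homomorphisms coming from the Hopf structure), then F and G induce the same homomorphism H/(fr^m(m_H)H) → S/(fr^m(m_S)S). -/
/-!
Let `I ⊆ S` be the ideal generated by the `p^m`-th powers of elements of `𝔪_S`. Its radical is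
`𝔪_S`, so the Noetherian local ring `S ⧸ I` is Artinian, hence complete, and the group of its
points is available. The point `F - G` maps `𝔪_H` into `𝔪_S`, and a `p^m`-th power lying in `𝔪_S`
lies in `I`; so after composing with `S → S ⧸ I` it kills `𝔪_H` and is the counit. By naturality of
the group law, `F` and `G` then agree as `S ⧸ I`-points.
-/

open IsLocalRing
universe u

lemma eq_of_mul_inv_eq_of_right_axioms {X : Type*} (mul : X → X → X) (inv : X → X) (one : X)
    (assoc : ∀ a b c, mul (mul a b) c = mul a (mul b c)) (mul_one : ∀ a, mul a one = a)
    (mul_inv : ∀ a, mul a (inv a) = one) {a b : X} (h : mul a (inv b) = one) : a = b := by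
  let _ : Mul X := ⟨mul⟩
  let _ : Inv X := ⟨inv⟩
  let _ : One X := ⟨one⟩
  let _ : Group X := Group.ofRightAxioms assoc mul_one mul_inv
  exact mul_inv_eq_one.mp h

section

variable {C H : Type*} [Field C] [CommRing H] [Algebra C H] [IsLocalRing H]

theorem AlgHom.map_mem_maximalIdeal_of_surjective_residue {S : Type*} [CommRing S] [Algebra C S]
    [IsLocalRing S] (hres : Function.Surjective (algebraMap C (ResidueField S)))
    (ψ : H →ₐ[C] S) {h : H} (hh : h ∈ maximalIdeal H) : ψ h ∈ maximalIdeal S := by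
  have hsurj : Function.Surjective ((residue S).comp ψ.toRingHom) := fun y => by
    obtain ⟨c, rfl⟩ := hres y
    exact ⟨algebraMap C H c, by simp [IsScalarTower.algebraMap_apply C S (ResidueField S)]⟩
  rw [← ker_eq_maximalIdeal _ hsurj, RingHom.mem_ker] at hh
  exact (residue_eq_zero_iff _).mp hh

theorem AlgHom.eq_ofId_comp_of_map_maximalIdeal {Q : Type*} [CommRing Q] [Algebra C Q]
    (ε : H →ₐ[C] C) (ψ : H →ₐ[C] Q) (hψ : ∀ h ∈ maximalIdeal H, ψ h = 0) :
    ψ = (Algebra.ofId C Q).comp ε := by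
  have hker : RingHom.ker ε.toRingHom = maximalIdeal H :=
    ker_eq_maximalIdeal _ fun c => ⟨algebraMap C H c, ε.commutes c⟩
  ext h
  have hh : ψ (h - algebraMap C H (ε h)) = 0 := hψ _ <| by rw [← hker]; simp
  rw [map_sub, ψ.commutes, sub_eq_zero] at hh
  exact hh

end

section

variable {R : Type*} [CommRing R] [IsLocalRing R] {q : ℕ}

theorem radical_span_pow_image_maximalIdeal (hq : q ≠ 0) :
    (Ideal.span ((· ^ q) '' (maximalIdeal R : Set R))).radical = maximalIdeal R := by
  refine le_antisymm ((maximalIdeal.isMaximal R).isPrime.radical_le_iff.mpr ?_) ?_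
  · rw [Ideal.span_le]
    rintro _ ⟨s, hs, rfl⟩
    exact Ideal.pow_mem_of_mem _ hs _ (Nat.pos_of_ne_zero hq)
  · exact fun s hs => ⟨q, Ideal.subset_span ⟨s, hs, rfl⟩⟩

theorem pow_mem_span_pow_image_maximalIdeal {s : R} (hs : s ^ q ∈ maximalIdeal R) :
    s ^ q ∈ Ideal.span ((· ^ q) '' (maximalIdeal R : Set R)) :=
  Ideal.subset_span ⟨s, (maximalIdeal.isMaximal R).isPrime.mem_of_pow_mem q hs, rfl⟩

theorem isArtinianRing_quotient_of_radical_eq_maximalIdeal [IsNoetherianRing R] {I : Ideal R}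
    (hI : I.radical = maximalIdeal R) : IsArtinianRing (R ⧸ I) := by
  refine IsLocalRing.quotient_artinian_of_mem_minimalPrimes_of_isLocalRing I ?_
  rw [← Ideal.radical_minimalPrimes, hI, Ideal.minimalPrimes_eq_subsingleton_self]
  rfl

end

theorem stmt11_general
    (C : Type u) [Field C] (p : ℕ) [Fact p.Prime]
    (H : Type u) [CommRing H] [Algebra C H] [IsLocalRing H]
    (S : Type u) [CommRing S] [Algebra C S] [IsLocalRing S] [IsNoetherianRing S]
    [IsAdicComplete (maximalIdeal S) S]
    (hresS : Function.Bijective (algebraMap C (ResidueField S)))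
    -- the counit of `H` (the residue map)
    (ε : H →ₐ[C] C)
    -- the group structure on points of the complete Hopf algebra `H`
    (add : ∀ (T : Type u) [CommRing T] [IsLocalRing T] [Algebra C T] [IsNoetherianRing T]
      [IsAdicComplete (maximalIdeal T) T],
      (H →ₐ[C] T) → (H →ₐ[C] T) → (H →ₐ[C] T))
    (neg : ∀ (T : Type u) [CommRing T] [IsLocalRing T] [Algebra C T] [IsNoetherianRing T]
      [IsAdicComplete (maximalIdeal T) T],
      (H →ₐ[C] T) → (H →ₐ[C] T))
    (hassoc : ∀ (T : Type u) [CommRing T] [IsLocalRing T] [Algebra C T] [IsNoetherianRing T]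
      [IsAdicComplete (maximalIdeal T) T] (F G K : H →ₐ[C] T),
      add T (add T F G) K = add T F (add T G K))
    (hzero : ∀ (T : Type u) [CommRing T] [IsLocalRing T] [Algebra C T] [IsNoetherianRing T]
      [IsAdicComplete (maximalIdeal T) T] (F : H →ₐ[C] T),
      add T F ((Algebra.ofId C T).comp ε) = F)
    (hneg : ∀ (T : Type u) [CommRing T] [IsLocalRing T] [Algebra C T] [IsNoetherianRing T]
      [IsAdicComplete (maximalIdeal T) T] (F : H →ₐ[C] T),
      add T F (neg T F) = (Algebra.ofId C T).comp ε)
    (hnat : ∀ (T T' : Type u) [CommRing T] [IsLocalRing T] [Algebra C T] [IsNoetherianRing T]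
      [IsAdicComplete (maximalIdeal T) T] [CommRing T'] [IsLocalRing T'] [Algebra C T']
      [IsNoetherianRing T'] [IsAdicComplete (maximalIdeal T') T']
      (φ : T →ₐ[C] T') (F G : H →ₐ[C] T),
      φ.comp (add T F G) = add T' (φ.comp F) (φ.comp G))
    (hnegnat : ∀ (T T' : Type u) [CommRing T] [IsLocalRing T] [Algebra C T]
      [IsNoetherianRing T] [IsAdicComplete (maximalIdeal T) T] [CommRing T'] [IsLocalRing T']
      [Algebra C T'] [IsNoetherianRing T'] [IsAdicComplete (maximalIdeal T') T']
      (φ : T →ₐ[C] T') (F : H →ₐ[C] T), φ.comp (neg T F) = neg T' (φ.comp F))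
    -- the data of the statement
    (m : ℕ) (F G : H →ₐ[C] S)
    (hFG : ∀ h : H, ∃ s : S, (add S F (neg S G)) h = s ^ p ^ m) :
    ∀ h : H, F h - G h ∈
      Ideal.span ((fun s : S => s ^ p ^ m) '' (maximalIdeal S : Set S)) := by
  set I := Ideal.span ((fun s : S => s ^ p ^ m) '' (maximalIdeal S : Set S))
  have hq : p ^ m ≠ 0 := pow_ne_zero m (Fact.out : p.Prime).ne_zero
  have hrad : I.radical = maximalIdeal S := radical_span_pow_image_maximalIdeal hq
  have : Nontrivial (S ⧸ I) := Ideal.Quotient.nontrivial_iff.mpr fun hI =>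
    (maximalIdeal.isMaximal S).ne_top (by rw [← hrad, hI, Ideal.radical_top])
  have : IsLocalRing (S ⧸ I) := .of_surjective' _ Ideal.Quotient.mk_surjective
  have : IsArtinianRing (S ⧸ I) := isArtinianRing_quotient_of_radical_eq_maximalIdeal hrad
  let φ := Ideal.Quotient.mkₐ C I
  have hφD : φ.comp (add S F (neg S G)) = (Algebra.ofId C (S ⧸ I)).comp ε := by
    refine AlgHom.eq_ofId_comp_of_map_maximalIdeal ε _ fun n hn => ?_
    obtain ⟨s, hs⟩ := hFG n
    have hDn := (add S F (neg S G)).map_mem_maximalIdeal_of_surjective_residue hresS.2 hn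
    rw [hs] at hDn
    exact Ideal.Quotient.eq_zero_iff_mem.mpr (hs ▸ pow_mem_span_pow_image_maximalIdeal hDn)
  have hφFG : φ.comp F = φ.comp G := by
    refine eq_of_mul_inv_eq_of_right_axioms (add _) (neg _) _ (hassoc _) (hzero _) (hneg _) ?_
    rw [← hnegnat S _ φ G, ← hnat, hφD]
  exact fun h => Ideal.Quotient.eq.mp (DFunLike.congr_fun hφFG h)

/-- `H` is a commutative complete Hopf algebra over a perfect field `C` of
characteristic `p > 0` (a Noetherian complete local `C`-algebra with residue field `C`; its
complete Hopf structure is recorded through the natural commutative group structure `add`,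
with inverse `neg` and identity the counit `ε`, on the sets of local `C`-algebra
homomorphisms from `H` into complete local Noetherian `C`-algebras).  Let `S` be a complete
local Noetherian `C`-algebra with residue field `C` and `F, G : H → S` local `C`-algebra
homomorphisms.  If `(F − G)(H) ⊆ S^{p^m}` for some `m ≥ 1`, then `F` and `G` induce the same
homomorphism `H[m] → S[m]`, i.e. `F h − G h` lies in the ideal of `S` generated by the
`p^m`-th powers of the maximal ideal, for every `h ∈ H`. -/
theorem stmt11
    (C : Type u) [Field C] (p : ℕ) [Fact p.Prime] [CharP C p] [PerfectRing C p]
    (H : Type u) [CommRing H] [Algebra C H] [IsLocalRing H] [IsNoetherianRing H]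
    [IsAdicComplete (maximalIdeal H) H]
    (hresH : Function.Bijective (algebraMap C (ResidueField H)))
    (S : Type u) [CommRing S] [Algebra C S] [IsLocalRing S] [IsNoetherianRing S]
    [IsAdicComplete (maximalIdeal S) S] [ExpChar S p]
    (hresS : Function.Bijective (algebraMap C (ResidueField S)))
    -- the counit of `H` (the residue map)
    (ε : H →ₐ[C] C) (hε : ∀ h ∈ maximalIdeal H, ε h = 0)
    -- the group structure on points of the complete Hopf algebra `H`
    (add : ∀ (T : Type u) [CommRing T] [IsLocalRing T] [Algebra C T] [IsNoetherianRing T]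
      [IsAdicComplete (maximalIdeal T) T],
      (H →ₐ[C] T) → (H →ₐ[C] T) → (H →ₐ[C] T))
    (neg : ∀ (T : Type u) [CommRing T] [IsLocalRing T] [Algebra C T] [IsNoetherianRing T]
      [IsAdicComplete (maximalIdeal T) T],
      (H →ₐ[C] T) → (H →ₐ[C] T))
    (hcomm : ∀ (T : Type u) [CommRing T] [IsLocalRing T] [Algebra C T] [IsNoetherianRing T]
      [IsAdicComplete (maximalIdeal T) T] (F G : H →ₐ[C] T), add T F G = add T G F)
    (hassoc : ∀ (T : Type u) [CommRing T] [IsLocalRing T] [Algebra C T] [IsNoetherianRing T]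
      [IsAdicComplete (maximalIdeal T) T] (F G K : H →ₐ[C] T),
      add T (add T F G) K = add T F (add T G K))
    (hzero : ∀ (T : Type u) [CommRing T] [IsLocalRing T] [Algebra C T] [IsNoetherianRing T]
      [IsAdicComplete (maximalIdeal T) T] (F : H →ₐ[C] T),
      add T F ((Algebra.ofId C T).comp ε) = F)
    (hneg : ∀ (T : Type u) [CommRing T] [IsLocalRing T] [Algebra C T] [IsNoetherianRing T]
      [IsAdicComplete (maximalIdeal T) T] (F : H →ₐ[C] T),
      add T F (neg T F) = (Algebra.ofId C T).comp ε)
    (hnat : ∀ (T T' : Type u) [CommRing T] [IsLocalRing T] [Algebra C T] [IsNoetherianRing T]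
      [IsAdicComplete (maximalIdeal T) T] [CommRing T'] [IsLocalRing T'] [Algebra C T']
      [IsNoetherianRing T'] [IsAdicComplete (maximalIdeal T') T']
      (φ : T →ₐ[C] T') (F G : H →ₐ[C] T),
      φ.comp (add T F G) = add T' (φ.comp F) (φ.comp G))
    (hnegnat : ∀ (T T' : Type u) [CommRing T] [IsLocalRing T] [Algebra C T]
      [IsNoetherianRing T] [IsAdicComplete (maximalIdeal T) T] [CommRing T'] [IsLocalRing T']
      [Algebra C T'] [IsNoetherianRing T'] [IsAdicComplete (maximalIdeal T') T']
      (φ : T →ₐ[C] T') (F : H →ₐ[C] T), φ.comp (neg T F) = neg T' (φ.comp F))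
    -- the data of the statement
    (m : ℕ) (hm : 1 ≤ m) (F G : H →ₐ[C] S)
    (hFloc : ∀ h ∈ maximalIdeal H, F h ∈ maximalIdeal S)
    (hGloc : ∀ h ∈ maximalIdeal H, G h ∈ maximalIdeal S)
    (hFG : ∀ h : H, ∃ s : S, (add S F (neg S G)) h = s ^ p ^ m) :
    ∀ h : H, F h - G h ∈
      Ideal.span ((fun s : S => s ^ p ^ m) '' (maximalIdeal S : Set S)) :=
  stmt11_general C p H S hresS ε add neg hassoc hzero hneg hnat hnegnat m F G hFG
end

section
/- Every A-compatible sequence of local C-algebra homomorphisms (f_m : T → R) is strongly Cauchy. -/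
/-!
Let `G = F (m + 1) - F m` in the group of points. Since `S` has residue field `C`, every
`C`-algebra map `H → S` is local, so each `G x` with `x ∈ 𝔪_H` is the `p ^ (m + 1)`-th power of
an element of `𝔪_S` and lies in the ideal `I` those powers generate. Hence `G` reduces to the
neutral point `ε` modulo `I`. The quotient `S ⧸ I` is again a complete Noetherian local ring,
and reduction modulo `I` is a homomorphism on points, so `F (m + 1) = G + F m` and `F m` agree
modulo `I`.
-/

open IsLocalRing

universe u

theorem IsPrecomplete.of_surjective {R M N : Type*} [CommRing R] [AddCommGroup M] [Module R M]
    [AddCommGroup N] [Module R N] {I : Ideal R} [IsPrecomplete I M] {f : M →ₗ[R] N}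
    (hf : Function.Surjective f) : IsPrecomplete I N := by
  refine AdicCompletion.of_surjective_iff.mp fun y ↦ ?_
  obtain ⟨x', rfl⟩ := AdicCompletion.map_surjective I hf y
  obtain ⟨x, rfl⟩ := AdicCompletion.of_surjective I M x'
  exact ⟨f x, (AdicCompletion.map_of I f x).symm⟩

theorem IsLocalRing.isAdicComplete_quotient {S : Type*} [CommRing S] [IsLocalRing S]
    [IsNoetherianRing S] [IsAdicComplete (maximalIdeal S) S] (I : Ideal S)
    [IsLocalRing (S ⧸ I)] : IsAdicComplete (maximalIdeal (S ⧸ I)) (S ⧸ I) where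
  toIsPrecomplete := by
    have : IsPrecomplete (maximalIdeal S) (S ⧸ I) :=
      .of_surjective (Submodule.mkQ_surjective (I.restrictScalars S))
    rw [← map_maximalIdeal_of_surjective (Ideal.Quotient.mk I) Ideal.Quotient.mk_surjective]
    exact IsPrecomplete.map_algebraMap_iff.mpr this

theorem IsLocalRing.comap_maximalIdeal_of_surjective_algebraMap {C H W : Type*} [CommRing C]
    [CommRing H] [Algebra C H] [IsLocalRing H] [CommRing W] [Algebra C W] [IsLocalRing W]
    (hres : Function.Surjective (algebraMap C (ResidueField W))) (f : H →ₐ[C] W) :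
    (maximalIdeal W).comap f = maximalIdeal H := by
  have hsurj : Function.Surjective ((residue W).comp (f : H →+* W)) := fun y ↦ by
    obtain ⟨c, rfl⟩ := hres y
    exact ⟨algebraMap C H c, by simp [IsScalarTower.algebraMap_apply C W (ResidueField W)]⟩
  rw [← ker_eq_maximalIdeal _ hsurj, ← RingHom.comap_ker, ker_residue]
  rfl

theorem Ideal.span_image_pow_le {R : Type*} [CommSemiring R] (J : Ideal R) {n : ℕ} (hn : n ≠ 0) :
    Ideal.span ((fun s ↦ s ^ n) '' (J : Set R)) ≤ J := by
  rw [Ideal.span_le]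
  rintro _ ⟨s, hs, rfl⟩
  exact J.pow_mem_of_mem hs n (Nat.pos_of_ne_zero hn)

theorem Ideal.Quotient.mkₐ_comp_eq_of_maximalIdeal_le_comap {C H S : Type*} [Field C]
    [CommRing H] [Algebra C H] [IsLocalRing H] [CommRing S] [Algebra C S]
    (ε : H →ₐ[C] C) {I : Ideal S} {G : H →ₐ[C] S} (hG : maximalIdeal H ≤ I.comap G) :
    (Ideal.Quotient.mkₐ C I).comp G = (Algebra.ofId C (S ⧸ I)).comp ε := by
  ext x
  have hx : x - algebraMap C H (ε x) ∈ maximalIdeal H :=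
    le_maximalIdeal (RingHom.ker_ne_top ε) (by simp)
  simp only [AlgHom.comp_apply, Ideal.Quotient.mkₐ_eq_mk, Algebra.ofId_apply]
  rw [← Ideal.Quotient.mk_algebraMap, ← AlgHom.commutes G, Ideal.Quotient.eq, ← map_sub]
  exact hG hx

theorem stmt14_general
    (C : Type u) [Field C] (p : ℕ) [Fact p.Prime]
    (H : Type u) [CommRing H] [Algebra C H] [IsLocalRing H]
    (S : Type u) [CommRing S] [Algebra C S] [IsLocalRing S] [IsNoetherianRing S]
    [IsAdicComplete (maximalIdeal S) S]
    (hresS : Function.Bijective (algebraMap C (ResidueField S)))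
    -- the counit of `H` (the residue map)
    (ε : H →ₐ[C] C)
    -- the group structure on points of the complete Hopf algebra `H`
    (add : ∀ (T : Type u) [CommRing T] [IsLocalRing T] [Algebra C T] [IsNoetherianRing T]
      [IsAdicComplete (maximalIdeal T) T],
      (H →ₐ[C] T) → (H →ₐ[C] T) → (H →ₐ[C] T))
    (neg : ∀ (T : Type u) [CommRing T] [IsLocalRing T] [Algebra C T] [IsNoetherianRing T]
      [IsAdicComplete (maximalIdeal T) T],
      (H →ₐ[C] T) → (H →ₐ[C] T))
    (hcomm : ∀ (T : Type u) [CommRing T] [IsLocalRing T] [Algebra C T] [IsNoetherianRing T]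
      [IsAdicComplete (maximalIdeal T) T] (F G : H →ₐ[C] T), add T F G = add T G F)
    (hassoc : ∀ (T : Type u) [CommRing T] [IsLocalRing T] [Algebra C T] [IsNoetherianRing T]
      [IsAdicComplete (maximalIdeal T) T] (F G K : H →ₐ[C] T),
      add T (add T F G) K = add T F (add T G K))
    (hzero : ∀ (T : Type u) [CommRing T] [IsLocalRing T] [Algebra C T] [IsNoetherianRing T]
      [IsAdicComplete (maximalIdeal T) T] (F : H →ₐ[C] T),
      add T F ((Algebra.ofId C T).comp ε) = F)
    (hneg : ∀ (T : Type u) [CommRing T] [IsLocalRing T] [Algebra C T] [IsNoetherianRing T]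
      [IsAdicComplete (maximalIdeal T) T] (F : H →ₐ[C] T),
      add T F (neg T F) = (Algebra.ofId C T).comp ε)
    (hnat : ∀ (T T' : Type u) [CommRing T] [IsLocalRing T] [Algebra C T] [IsNoetherianRing T]
      [IsAdicComplete (maximalIdeal T) T] [CommRing T'] [IsLocalRing T'] [Algebra C T']
      [IsNoetherianRing T'] [IsAdicComplete (maximalIdeal T') T']
      (φ : T →ₐ[C] T') (F G : H →ₐ[C] T),
      φ.comp (add T F G) = add T' (φ.comp F) (φ.comp G))
    -- the `A`-compatible sequence
    (F : ℕ → (H →ₐ[C] S))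
    (hcompat : ∀ (m : ℕ) (h : H), ∃ s : S,
      (add S (F (m + 1)) (neg S (F m))) h = s ^ p ^ (m + 1)) :
    -- the sequence is strongly Cauchy
    ∀ (m : ℕ) (h : H), F (m + 1) h - F m h ∈
      Ideal.span ((fun s : S => s ^ p ^ (m + 1)) '' (maximalIdeal S : Set S)) := by
  intro m h
  set I := Ideal.span ((fun s : S => s ^ p ^ (m + 1)) '' (maximalIdeal S : Set S))
  have hI : I ≤ maximalIdeal S :=
    (maximalIdeal S).span_image_pow_le (pow_ne_zero _ (Fact.out : p.Prime).ne_zero)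
  have : Nontrivial (S ⧸ I) :=
    Ideal.Quotient.nontrivial_iff.mpr (ne_top_of_le_ne_top (maximalIdeal.isMaximal S).ne_top hI)
  have : IsLocalRing (S ⧸ I) := .of_surjective' (Ideal.Quotient.mk I) Ideal.Quotient.mk_surjective
  have := isAdicComplete_quotient I
  set π := Ideal.Quotient.mkₐ C I
  set G := add S (F (m + 1)) (neg S (F m))
  have hGI : maximalIdeal H ≤ I.comap G := fun x hx ↦ by
    rw [← comap_maximalIdeal_of_surjective_algebraMap hresS.2 G] at hx
    obtain ⟨s, hs : G x = s ^ p ^ (m + 1)⟩ := hcompat m x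
    have hs_mem : s ∈ maximalIdeal S :=
      (maximalIdeal.isMaximal S).isPrime.mem_of_pow_mem _ (by rw [← hs]; exact hx)
    rw [Ideal.mem_comap, hs]
    exact Ideal.subset_span ⟨s, hs_mem, rfl⟩
  have hπG : π.comp G = (Algebra.ofId C (S ⧸ I)).comp ε :=
    Ideal.Quotient.mkₐ_comp_eq_of_maximalIdeal_le_comap ε hGI
  have hGF : add S G (F m) = F (m + 1) := by
    rw [hassoc, hcomm S (neg S (F m)), hneg, hzero]
  have hπF : π.comp (F (m + 1)) = π.comp (F m) := by
    rw [← hGF, hnat S (S ⧸ I) π G (F m), hπG, hcomm, hzero]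
  exact Ideal.Quotient.eq.mp (DFunLike.congr_fun hπF h)

/-- Every `A`-compatible sequence is strongly Cauchy.  Here `A` is a
commutative algebraic group over a perfect field `C` of characteristic `p > 0`; the complete
local Hopf algebra `H` is the completion of the local ring `T = O_{A,0}` of `A` at the
identity (with its group structure `add`/`neg` on points into complete local Noetherian
`C`-algebras, identity the counit `ε`), and `S` is (the completion of) a Noetherian local
`C`-algebra `R` with residue field `C`.  A sequence of local `C`-algebra homomorphisms
`(f_m : H → S)` is `A`-compatible if for each `m` the Hopf-difference `f_{m+1} − f_m` lands
in the subring `S^{p^{m+1}}` of `p^{m+1}`-th powers; strongly Cauchy means that `f_m` and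
`f_{m+1}` induce the same map modulo the ideal generated by the `p^{m+1}`-th powers of the
maximal ideal. -/
theorem stmt14
    (C : Type u) [Field C] (p : ℕ) [Fact p.Prime] [CharP C p] [PerfectRing C p]
    (H : Type u) [CommRing H] [Algebra C H] [IsLocalRing H] [IsNoetherianRing H]
    [IsAdicComplete (maximalIdeal H) H]
    (hresH : Function.Bijective (algebraMap C (ResidueField H)))
    (S : Type u) [CommRing S] [Algebra C S] [IsLocalRing S] [IsNoetherianRing S]
    [IsAdicComplete (maximalIdeal S) S] [ExpChar S p]
    (hresS : Function.Bijective (algebraMap C (ResidueField S)))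
    -- the counit of `H` (the residue map)
    (ε : H →ₐ[C] C) (hε : ∀ h ∈ maximalIdeal H, ε h = 0)
    -- the group structure on points of the complete Hopf algebra `H`
    (add : ∀ (T : Type u) [CommRing T] [IsLocalRing T] [Algebra C T] [IsNoetherianRing T]
      [IsAdicComplete (maximalIdeal T) T],
      (H →ₐ[C] T) → (H →ₐ[C] T) → (H →ₐ[C] T))
    (neg : ∀ (T : Type u) [CommRing T] [IsLocalRing T] [Algebra C T] [IsNoetherianRing T]
      [IsAdicComplete (maximalIdeal T) T],
      (H →ₐ[C] T) → (H →ₐ[C] T))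
    (hcomm : ∀ (T : Type u) [CommRing T] [IsLocalRing T] [Algebra C T] [IsNoetherianRing T]
      [IsAdicComplete (maximalIdeal T) T] (F G : H →ₐ[C] T), add T F G = add T G F)
    (hassoc : ∀ (T : Type u) [CommRing T] [IsLocalRing T] [Algebra C T] [IsNoetherianRing T]
      [IsAdicComplete (maximalIdeal T) T] (F G K : H →ₐ[C] T),
      add T (add T F G) K = add T F (add T G K))
    (hzero : ∀ (T : Type u) [CommRing T] [IsLocalRing T] [Algebra C T] [IsNoetherianRing T]
      [IsAdicComplete (maximalIdeal T) T] (F : H →ₐ[C] T),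
      add T F ((Algebra.ofId C T).comp ε) = F)
    (hneg : ∀ (T : Type u) [CommRing T] [IsLocalRing T] [Algebra C T] [IsNoetherianRing T]
      [IsAdicComplete (maximalIdeal T) T] (F : H →ₐ[C] T),
      add T F (neg T F) = (Algebra.ofId C T).comp ε)
    (hnat : ∀ (T T' : Type u) [CommRing T] [IsLocalRing T] [Algebra C T] [IsNoetherianRing T]
      [IsAdicComplete (maximalIdeal T) T] [CommRing T'] [IsLocalRing T'] [Algebra C T']
      [IsNoetherianRing T'] [IsAdicComplete (maximalIdeal T') T']
      (φ : T →ₐ[C] T') (F G : H →ₐ[C] T),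
      φ.comp (add T F G) = add T' (φ.comp F) (φ.comp G))
    (hnegnat : ∀ (T T' : Type u) [CommRing T] [IsLocalRing T] [Algebra C T]
      [IsNoetherianRing T] [IsAdicComplete (maximalIdeal T) T] [CommRing T'] [IsLocalRing T']
      [Algebra C T'] [IsNoetherianRing T'] [IsAdicComplete (maximalIdeal T') T']
      (φ : T →ₐ[C] T') (F : H →ₐ[C] T), φ.comp (neg T F) = neg T' (φ.comp F))
    -- the `A`-compatible sequence
    (F : ℕ → (H →ₐ[C] S))
    (hFloc : ∀ (m : ℕ), ∀ h ∈ maximalIdeal H, F m h ∈ maximalIdeal S)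
    (hcompat : ∀ (m : ℕ) (h : H), ∃ s : S,
      (add S (F (m + 1)) (neg S (F m))) h = s ^ p ^ (m + 1)) :
    -- the sequence is strongly Cauchy
    ∀ (m : ℕ) (h : H), F (m + 1) h - F m h ∈
      Ideal.span ((fun s : S => s ^ p ^ (m + 1)) '' (maximalIdeal S : Set S)) :=
  stmt14_general C p H S hresS ε add neg hcomm hassoc hzero hneg hnat F hcompat
end

section
/- Let (f_m : T → R) be an A-compatible sequence with limit F : T̂ → R̂. Then F is the 0-map (i.e., F(m_{T̂}) = 0) if and only if for all k, f_k(T) ⊆ R^{p^{k+1}}. -/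
/-!
If `G` is the zero map, then `f_{k+m} → 0`, so `f_k` is the limit of the differences
`f_k ⊖ f_{k+m} = ⊖ ∑_{i<m} (f_{k+i+1} ⊖ f_{k+i})` in the group of points. The summands are
`p^{k+i+1}`-th powers, so they lift along the `(k+1)`-fold Frobenius `S^{(p^{k+1})} → S`, the lift
of the `i`-th one vanishing modulo `𝔪^{p^i}`. The group law commutes with reduction modulo `𝔪^n`,
so the partial sums of the lifts converge, and `f_k` is the `p^{k+1}`-th power of their limit;
that root lies in `R` because `R ∩ R̂^q = R^q`. Conversely, if every `f_k` takes values in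
`p^{k+1}`-th powers, then `f_k(𝔪_H) ⊆ 𝔪^{p^k}`, hence `G(𝔪_H) ⊆ ⋂ 𝔪^n = 0` by Krull's
intersection theorem.
-/

open IsLocalRing

universe u

theorem isAdicComplete_of_pow_eq_bot {R M : Type*} [CommRing R] [AddCommGroup M] [Module R M]
    {I : Ideal R} {n : ℕ} (h : I ^ n = ⊥) : IsAdicComplete I M where
  haus' x hx := by simpa [h] using hx n
  prec' f hf := by
    refine ⟨f n, fun m => ?_⟩
    rcases le_or_gt m n with hmn | hnm
    · exact hf hmn
    · have := hf hnm.le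
      rw [h, Submodule.bot_smul, SModEq.bot] at this
      rw [this]

theorem IsPrecomplete.exists_forall_sub_mem_pow {R : Type*} [CommRing R] {I : Ideal R}
    [IsPrecomplete I R] {x : ℕ → R} (hx : ∀ n, x (n + 1) - x n ∈ I ^ n) :
    ∃ L, ∀ n, x n - L ∈ I ^ n := by
  have hcauchy : ∀ {m n}, m ≤ n → x n - x m ∈ I ^ m := by
    intro m n hmn
    induction n, hmn using Nat.le_induction with
    | base => simp
    | succ n hmn ih =>
      simpa using add_mem (Ideal.pow_le_pow_right hmn (hx n)) ih
  obtain ⟨L, hL⟩ := IsPrecomplete.prec ‹_› (f := x) fun hmn => by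
    rw [SModEq.sub_mem, smul_eq_mul, Ideal.mul_top, ← neg_sub]
    exact neg_mem (hcauchy hmn)
  exact ⟨L, fun n => by simpa [SModEq.sub_mem] using hL n⟩

theorem eq_zero_of_forall_mem_maximalIdeal_pow {R : Type*} [CommRing R] [IsNoetherianRing R]
    [IsLocalRing R] {x : R} (hx : ∀ n, x ∈ maximalIdeal R ^ n) : x = 0 := by
  have hKrull := Ideal.iInf_pow_eq_bot_of_isLocalRing _ (maximalIdeal.isMaximal R).ne_top
  simpa [← Ideal.mem_bot, ← hKrull, Ideal.mem_iInf] using hx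

theorem pow_mem_maximalIdeal_pow_of_pow_mem {R : Type*} [CommRing R] [IsLocalRing R] {s : R}
    {k : ℕ} (n : ℕ) (hs : s ^ k ∈ maximalIdeal R) : s ^ n ∈ maximalIdeal R ^ n :=
  Ideal.pow_mem_pow ((maximalIdeal.isMaximal R).isPrime.mem_of_pow_mem k hs) n

theorem AlgHom.sub_algebraMap_mem_maximalIdeal {C H : Type*} [Field C] [CommRing H]
    [IsLocalRing H] [Algebra C H] (ε : H →ₐ[C] C) (h : H) :
    h - algebraMap C H (ε h) ∈ maximalIdeal H := by
  have hsurj : Function.Surjective ε := fun c => ⟨algebraMap C H c, ε.commutes c⟩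
  rw [← ker_eq_maximalIdeal (ε : H →+* C) hsurj, RingHom.mem_ker]
  simp

theorem AlgHom.map_mem_maximalIdeal {C H S : Type*} [CommRing C] [CommRing H] [IsLocalRing H]
    [Algebra C H] [CommRing S] [IsLocalRing S] [Algebra C S]
    (hS : Function.Surjective (algebraMap C (ResidueField S))) (ψ : H →ₐ[C] S) {h : H}
    (hh : h ∈ maximalIdeal H) : ψ h ∈ maximalIdeal S := by
  have hsurj : Function.Surjective ((residue S).comp (ψ : H →+* S)) := fun y => by
    obtain ⟨c, rfl⟩ := hS y
    refine ⟨algebraMap C H c, ?_⟩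
    simp only [RingHom.comp_apply, AlgHom.coe_toRingHom, ψ.commutes]
    rfl
  rw [← ker_eq_maximalIdeal _ hsurj, RingHom.mem_ker] at hh
  exact (residue_eq_zero_iff _).mp hh

theorem AlgHom.exists_comp_eq_of_forall_mem_range {R A B H : Type*} [CommSemiring R]
    [Semiring A] [Semiring B] [Semiring H] [Algebra R A] [Algebra R B] [Algebra R H]
    {f : A →ₐ[R] B} (hf : Function.Injective f) {g : H →ₐ[R] B} (hg : ∀ x, g x ∈ f.range) :
    ∃ ψ : H →ₐ[R] A, f.comp ψ = g :=
  ⟨(AlgEquiv.ofInjective f hf).symm.toAlgHom.comp (g.codRestrict f.range hg), by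
    ext x
    simp [← AlgEquiv.ofInjective_apply f hf]⟩

theorem eq_pow_of_forall_sub_mem_pow {R : Type*} [CommRing R] [IsNoetherianRing R]
    [IsLocalRing R] {p : ℕ} [ExpChar R p] (e : ℕ) {y L : R} {x : ℕ → R}
    (hy : ∀ m, y - x m ^ p ^ e ∈ maximalIdeal R ^ m) (hx : ∀ m, x m - L ∈ maximalIdeal R ^ m) :
    y = L ^ p ^ e := by
  rw [← sub_eq_zero]
  refine eq_zero_of_forall_mem_maximalIdeal_pow fun m => ?_
  have hxL : (x m - L) ^ p ^ e ∈ maximalIdeal R ^ m :=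
    Ideal.pow_mem_of_mem _ (hx m) _ (expChar_pow_pos R p e)
  rw [sub_pow_expChar_pow] at hxL
  simpa using add_mem (hy m) hxL

theorem Ideal.span_pow_image_le {R : Type*} [CommRing R] (I : Ideal R) (n : ℕ) :
    Ideal.span ((· ^ n) '' (I : Set R)) ≤ I ^ n :=
  Ideal.span_le.mpr <| by
    rintro _ ⟨x, hx, rfl⟩
    exact Ideal.pow_mem_pow hx n

theorem eq_zero_of_algebraMap_mem_maximalIdeal {C S : Type*} [Field C] [CommRing S]
    [IsLocalRing S] [Algebra C S] {c : C} (hc : algebraMap C S c ∈ maximalIdeal S) : c = 0 := by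
  by_contra hc0
  exact (mem_maximalIdeal _).mp hc ((IsUnit.mk0 c hc0).map (algebraMap C S))

section

variable {C H S : Type*} [Field C] [CommRing H] [IsLocalRing H] [Algebra C H] [CommRing S]
  [Algebra C S] {ε : H →ₐ[C] C} {G : H →ₐ[C] S}

theorem AlgHom.apply_eq_algebraMap_counit (hG : ∀ h ∈ maximalIdeal H, G h = 0) (h : H) :
    G h = algebraMap C S (ε h) := by
  rw [← sub_eq_zero, ← G.commutes, ← map_sub]
  exact hG _ (ε.sub_algebraMap_mem_maximalIdeal h)

variable [IsLocalRing S] {F : ℕ → H →ₐ[C] S} {p : ℕ}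

theorem AlgHom.apply_eq_algebraMap_counit_of_mem_range
    (hFloc : ∀ m, ∀ h ∈ maximalIdeal H, F m h ∈ maximalIdeal S)
    (hlim : ∀ h, G h - F 0 h ∈ maximalIdeal S) (hG : ∀ h, G h ∈ Set.range (algebraMap C S))
    (h : H) : G h = algebraMap C S (ε h) := by
  refine AlgHom.apply_eq_algebraMap_counit (fun h hh => ?_) h
  obtain ⟨c, hc⟩ := hG h
  have hGh : G h ∈ maximalIdeal S := by simpa using add_mem (hlim h) (hFloc 0 h hh)
  have hc0 : c = 0 := eq_zero_of_algebraMap_mem_maximalIdeal (S := S) (by rwa [hc])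
  rw [← hc, hc0, map_zero]

theorem AlgHom.apply_eq_algebraMap_counit_of_forall_eq_pow [IsNoetherianRing S] (hp : 1 < p)
    (hFloc : ∀ m, ∀ h ∈ maximalIdeal H, F m h ∈ maximalIdeal S)
    (hlim : ∀ m h, G h - F m h ∈ maximalIdeal S ^ p ^ m)
    (hpow : ∀ k h, ∃ s : S, F k h = s ^ p ^ k) (h : H) : G h = algebraMap C S (ε h) := by
  refine AlgHom.apply_eq_algebraMap_counit (fun h hh => ?_) h
  refine eq_zero_of_forall_mem_maximalIdeal_pow fun n => ?_
  obtain ⟨s, hs⟩ := hpow n h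
  have hFn : F n h ∈ maximalIdeal S ^ p ^ n :=
    hs ▸ pow_mem_maximalIdeal_pow_of_pow_mem _ (hs ▸ hFloc n h hh)
  exact Ideal.pow_le_pow_right (Nat.lt_pow_self hp).le (by simpa using add_mem (hlim n h) hFn)

end

/-- `S` with `c : C` acting through its `p ^ e`-th root, which makes the `e`-fold Frobenius
`FrobeniusTwist S p e → S` a `C`-algebra map. -/
def FrobeniusTwist (S : Type u) (_p _e : ℕ) : Type u := S

namespace FrobeniusTwist

variable (C S : Type u) (p e : ℕ)

instance [CommRing S] : CommRing (FrobeniusTwist S p e) := inferInstanceAs (CommRing S)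

instance [CommRing S] [IsLocalRing S] : IsLocalRing (FrobeniusTwist S p e) :=
  inferInstanceAs (IsLocalRing S)

instance [CommRing S] [IsNoetherianRing S] : IsNoetherianRing (FrobeniusTwist S p e) :=
  inferInstanceAs (IsNoetherianRing S)

instance [CommRing S] [IsLocalRing S] [IsAdicComplete (maximalIdeal S) S] :
    IsAdicComplete (maximalIdeal (FrobeniusTwist S p e)) (FrobeniusTwist S p e) :=
  inferInstanceAs (IsAdicComplete (maximalIdeal S) S)

variable [Field C] [ExpChar C p] [PerfectRing C p] [CommRing S] [Algebra C S]

noncomputable instance : Algebra C (FrobeniusTwist S p e) :=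
  ((algebraMap C S).comp (iterateFrobeniusEquiv C p e).symm.toRingHom).toAlgebra

variable [ExpChar S p]

noncomputable def frobenius : FrobeniusTwist S p e →ₐ[C] S where
  toRingHom := (iterateFrobenius S p e : S →+* S)
  commutes' c := by
    show iterateFrobenius S p e (algebraMap C S ((iterateFrobeniusEquiv C p e).symm c)) =
      algebraMap C S c
    rw [iterateFrobenius_def, ← map_pow, ← iterateFrobeniusEquiv_def, RingEquiv.apply_symm_apply]

variable {C S p}

theorem frobenius_injective (hFrob : Function.Injective (fun s : S => s ^ p)) :
    Function.Injective (frobenius C S p e) := by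
  have h := hFrob.iterate e
  rwa [pow_iterate] at h

theorem exists_frobenius_comp_eq {H : Type u} [CommRing H] [Algebra C H]
    (hFrob : Function.Injective (fun s : S => s ^ p)) {φ : H →ₐ[C] S}
    (hφ : ∀ h, ∃ s : S, φ h = s ^ p ^ e) : ∃ ψ, (frobenius C S p e).comp ψ = φ :=
  AlgHom.exists_comp_eq_of_forall_mem_range (frobenius_injective e hFrob) fun h => by
    obtain ⟨s, hs⟩ := hφ h
    exact ⟨s, hs.symm⟩

end FrobeniusTwist

/-- The complete Hopf algebra structure of `H`, as a group law on points with values in complete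
local Noetherian `C`-algebras, natural in the test ring and with identity the counit `ε`. -/
structure PointGroupLaw (C H : Type u) [CommRing C] [CommRing H] [Algebra C H]
    (ε : H →ₐ[C] C) where
  add : ∀ (T : Type u) [CommRing T] [IsLocalRing T] [Algebra C T] [IsNoetherianRing T]
    [IsAdicComplete (maximalIdeal T) T], (H →ₐ[C] T) → (H →ₐ[C] T) → (H →ₐ[C] T)
  neg : ∀ (T : Type u) [CommRing T] [IsLocalRing T] [Algebra C T] [IsNoetherianRing T]
    [IsAdicComplete (maximalIdeal T) T], (H →ₐ[C] T) → (H →ₐ[C] T)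
  add_comm : ∀ (T : Type u) [CommRing T] [IsLocalRing T] [Algebra C T] [IsNoetherianRing T]
    [IsAdicComplete (maximalIdeal T) T] (F G : H →ₐ[C] T), add T F G = add T G F
  add_assoc : ∀ (T : Type u) [CommRing T] [IsLocalRing T] [Algebra C T] [IsNoetherianRing T]
    [IsAdicComplete (maximalIdeal T) T] (F G K : H →ₐ[C] T),
    add T (add T F G) K = add T F (add T G K)
  add_zero : ∀ (T : Type u) [CommRing T] [IsLocalRing T] [Algebra C T] [IsNoetherianRing T]
    [IsAdicComplete (maximalIdeal T) T] (F : H →ₐ[C] T),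
    add T F ((Algebra.ofId C T).comp ε) = F
  add_neg : ∀ (T : Type u) [CommRing T] [IsLocalRing T] [Algebra C T] [IsNoetherianRing T]
    [IsAdicComplete (maximalIdeal T) T] (F : H →ₐ[C] T),
    add T F (neg T F) = (Algebra.ofId C T).comp ε
  comp_add : ∀ (T T' : Type u) [CommRing T] [IsLocalRing T] [Algebra C T] [IsNoetherianRing T]
    [IsAdicComplete (maximalIdeal T) T] [CommRing T'] [IsLocalRing T'] [Algebra C T']
    [IsNoetherianRing T'] [IsAdicComplete (maximalIdeal T') T']
    (φ : T →ₐ[C] T') (F G : H →ₐ[C] T), φ.comp (add T F G) = add T' (φ.comp F) (φ.comp G)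
  comp_neg : ∀ (T T' : Type u) [CommRing T] [IsLocalRing T] [Algebra C T]
    [IsNoetherianRing T] [IsAdicComplete (maximalIdeal T) T] [CommRing T'] [IsLocalRing T']
    [Algebra C T'] [IsNoetherianRing T'] [IsAdicComplete (maximalIdeal T') T']
    (φ : T →ₐ[C] T') (F : H →ₐ[C] T), φ.comp (neg T F) = neg T' (φ.comp F)

namespace PointGroupLaw

section

variable {C H : Type u} [CommRing C] [CommRing H] [Algebra C H] {ε : H →ₐ[C] C}
  (law : PointGroupLaw C H ε)

def Points (_law : PointGroupLaw C H ε) (T : Type u) [CommRing T] [Algebra C T] : Type u :=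
  H →ₐ[C] T

variable (T : Type u) [CommRing T] [Algebra C T]

instance : FunLike (law.Points T) H T := inferInstanceAs (FunLike (H →ₐ[C] T) H T)

instance : Zero (law.Points T) := ⟨(Algebra.ofId C T).comp ε⟩

variable [IsLocalRing T] [IsNoetherianRing T] [IsAdicComplete (maximalIdeal T) T]

instance : Add (law.Points T) := ⟨law.add T⟩

instance : Neg (law.Points T) := ⟨law.neg T⟩

instance : AddCommGroup (law.Points T) where
  add_assoc := law.add_assoc T
  add_zero := law.add_zero T
  zero_add F := (law.add_comm T _ _).trans (law.add_zero T F)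
  neg_add_cancel F := (law.add_comm T _ _).trans (law.add_neg T F)
  add_comm := law.add_comm T
  nsmul := nsmulRec
  zsmul := zsmulRec

variable {T} {T' : Type u} [CommRing T'] [IsLocalRing T'] [Algebra C T'] [IsNoetherianRing T']
  [IsAdicComplete (maximalIdeal T') T']

def map (φ : T →ₐ[C] T') : law.Points T →+ law.Points T' where
  toFun F := φ.comp F
  map_zero' := AlgHom.ext fun h => φ.commutes (ε h)
  map_add' := law.comp_add T T' φ

/-- Reduction modulo `𝔪 ^ n` is a homomorphism of point groups, since `T ⧸ 𝔪 ^ n` is again a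
complete local Noetherian ring. -/
theorem sub_apply_sub_mem_pow {n : ℕ} (F G : law.Points T)
    (hG : ∀ h, G h - algebraMap C T (ε h) ∈ maximalIdeal T ^ n) (h : H) :
    (F - G) h - F h ∈ maximalIdeal T ^ n := by
  rcases eq_or_ne n 0 with rfl | hn
  · simp
  set I := maximalIdeal T ^ n
  have hI : I ≤ maximalIdeal T := Ideal.pow_le_self hn
  have : IsLocalRing (T ⧸ I) :=
    have : Nontrivial (T ⧸ I) :=
      Ideal.Quotient.nontrivial_iff.mpr (ne_top_of_le_ne_top (maximalIdeal.isMaximal T).ne_top hI)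
    .of_surjective' (Ideal.Quotient.mk I) Ideal.Quotient.mk_surjective
  have : IsAdicComplete (maximalIdeal (T ⧸ I)) (T ⧸ I) := by
    refine isAdicComplete_of_pow_eq_bot (n := n) ?_
    rw [← map_maximalIdeal_of_surjective _ Ideal.Quotient.mk_surjective, ← Ideal.map_pow,
      Ideal.map_quotient_self]
  have hG0 : law.map (Ideal.Quotient.mkₐ C I) G = 0 :=
    AlgHom.ext fun h => Ideal.Quotient.eq.mpr (hG h)
  have hFG : law.map (Ideal.Quotient.mkₐ C I) (F - G) = law.map (Ideal.Quotient.mkₐ C I) F := by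
    rw [map_sub, hG0, sub_zero]
  exact Ideal.Quotient.eq.mp (congrArg (· h) hFG)

theorem exists_forall_apply_sub_mem_pow (V : ℕ → law.Points T)
    (hV : ∀ j h, (V j - V (j + 1)) h - algebraMap C T (ε h) ∈ maximalIdeal T ^ j) (h : H) :
    ∃ L, ∀ m, V m h - L ∈ maximalIdeal T ^ m :=
  IsPrecomplete.exists_forall_sub_mem_pow fun j => by
    simpa using law.sub_apply_sub_mem_pow (V j) _ (hV j) h

end

section

variable {C H : Type u} [Field C] [CommRing H] [IsLocalRing H] [Algebra C H] {ε : H →ₐ[C] C}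
  (law : PointGroupLaw C H ε) {p : ℕ} [ExpChar C p] [PerfectRing C p]
  {S : Type u} [CommRing S] [IsLocalRing S] [Algebra C S] [IsNoetherianRing S]
  [IsAdicComplete (maximalIdeal S) S] [ExpChar S p]

theorem exists_map_frobenius_eq (hS : Function.Surjective (algebraMap C (ResidueField S)))
    (hFrob : Function.Injective (fun s : S => s ^ p)) (e j : ℕ) (δ : law.Points S)
    (hδ : ∀ h, ∃ s : S, δ h = s ^ p ^ (j + e)) :
    ∃ D : law.Points (FrobeniusTwist S p e), law.map (FrobeniusTwist.frobenius C S p e) D = δ ∧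
      ∀ h, D h - algebraMap C _ (ε h) ∈ maximalIdeal (FrobeniusTwist S p e) ^ p ^ j := by
  obtain ⟨D, hD⟩ := FrobeniusTwist.exists_frobenius_comp_eq e hFrob (φ := δ)
    fun h => by
      obtain ⟨s, hs⟩ := hδ h
      exact ⟨s ^ p ^ j, hs.trans (by rw [← pow_mul, ← pow_add])⟩
  have hD0 : ∀ h, D h - algebraMap C _ (ε h) ∈ maximalIdeal (FrobeniusTwist S p e) ^ p ^ j := by
    intro h
    obtain ⟨s, hs⟩ := hδ (h - algebraMap C H (ε h))
    have hDs : (D (h - algebraMap C H (ε h)) : S) = s ^ p ^ j := by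
      refine FrobeniusTwist.frobenius_injective (C := C) e hFrob ?_
      show (D (h - algebraMap C H (ε h)) : S) ^ p ^ e = (s ^ p ^ j) ^ p ^ e
      rw [← pow_mul, ← pow_add]
      exact (AlgHom.congr_fun hD _).trans hs
    have hs_mem : s ^ p ^ (j + e) ∈ maximalIdeal S :=
      hs ▸ AlgHom.map_mem_maximalIdeal hS δ (ε.sub_algebraMap_mem_maximalIdeal h)
    rw [← D.commutes, ← map_sub]
    exact hDs ▸ pow_mem_maximalIdeal_pow_of_pow_mem _ hs_mem
  exact ⟨D, hD, hD0⟩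

theorem exists_eq_pow_of_forall_sub_mem_pow (hp : 1 < p)
    (hS : Function.Surjective (algebraMap C (ResidueField S)))
    (hFrob : Function.Injective (fun s : S => s ^ p)) (F : ℕ → law.Points S)
    (hcompat : ∀ m h, ∃ s : S, (F (m + 1) - F m) h = s ^ p ^ (m + 1))
    (hF : ∀ m h, F m h - algebraMap C S (ε h) ∈ maximalIdeal S ^ p ^ m) (k : ℕ) (h : H) :
    ∃ s : S, F k h = s ^ p ^ (k + 1) := by
  have hmono : ∀ n, n ≤ p ^ n := fun n => (Nat.lt_pow_self hp).le
  choose D hD hD0 using fun j => law.exists_map_frobenius_eq hS hFrob (k + 1) j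
    (F (k + j + 1) - F (k + j)) fun h => by
      obtain ⟨s, hs⟩ := hcompat (k + j) h
      exact ⟨s, by rw [hs, show j + (k + 1) = k + j + 1 by omega]⟩
  let V : ℕ → law.Points (FrobeniusTwist S p (k + 1)) := fun m => -∑ i ∈ Finset.range m, D i
  have hV : ∀ m, law.map (FrobeniusTwist.frobenius C S p (k + 1)) (V m) = F k - F (k + m) := by
    intro m
    simp only [V, map_neg, map_sum, hD]
    rw [neg_eq_iff_eq_neg, neg_sub]
    exact Finset.sum_range_sub (fun i => F (k + i)) m
  have hVsucc : ∀ j, V j - V (j + 1) = D j := by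
    intro j
    simp only [V, Finset.sum_range_succ]
    abel
  obtain ⟨L, hL⟩ := law.exists_forall_apply_sub_mem_pow V
    (fun j h => hVsucc j ▸ Ideal.pow_le_pow_right (hmono j) (hD0 j h)) h
  refine ⟨L, eq_pow_of_forall_sub_mem_pow (k + 1) (x := fun m => V m h) (fun m => ?_) hL⟩
  have hFk := law.sub_apply_sub_mem_pow (F k) (F (k + m)) (hF (k + m)) h
  rw [← hV, ← neg_sub] at hFk
  exact Ideal.pow_le_pow_right ((hmono m).trans (Nat.pow_le_pow_right (by omega) (by omega)))
    (neg_mem_iff.mp hFk)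

end

end PointGroupLaw

theorem stmt15_general
    (C : Type u) [Field C] (p : ℕ) [Fact p.Prime] [CharP C p] [PerfectRing C p]
    (H : Type u) [CommRing H] [Algebra C H] [IsLocalRing H]
    (S : Type u) [CommRing S] [Algebra C S] [IsLocalRing S] [IsNoetherianRing S]
    [IsAdicComplete (maximalIdeal S) S] [ExpChar S p]
    (hresS : Function.Bijective (algebraMap C (ResidueField S)))
    -- the counit of `H` (the residue map)
    (ε : H →ₐ[C] C)
    -- the group structure on points of the complete Hopf algebra `H`
    (add : ∀ (T : Type u) [CommRing T] [IsLocalRing T] [Algebra C T] [IsNoetherianRing T]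
      [IsAdicComplete (maximalIdeal T) T],
      (H →ₐ[C] T) → (H →ₐ[C] T) → (H →ₐ[C] T))
    (neg : ∀ (T : Type u) [CommRing T] [IsLocalRing T] [Algebra C T] [IsNoetherianRing T]
      [IsAdicComplete (maximalIdeal T) T],
      (H →ₐ[C] T) → (H →ₐ[C] T))
    (hcomm : ∀ (T : Type u) [CommRing T] [IsLocalRing T] [Algebra C T] [IsNoetherianRing T]
      [IsAdicComplete (maximalIdeal T) T] (F G : H →ₐ[C] T), add T F G = add T G F)
    (hassoc : ∀ (T : Type u) [CommRing T] [IsLocalRing T] [Algebra C T] [IsNoetherianRing T]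
      [IsAdicComplete (maximalIdeal T) T] (F G K : H →ₐ[C] T),
      add T (add T F G) K = add T F (add T G K))
    (hzero : ∀ (T : Type u) [CommRing T] [IsLocalRing T] [Algebra C T] [IsNoetherianRing T]
      [IsAdicComplete (maximalIdeal T) T] (F : H →ₐ[C] T),
      add T F ((Algebra.ofId C T).comp ε) = F)
    (hneg : ∀ (T : Type u) [CommRing T] [IsLocalRing T] [Algebra C T] [IsNoetherianRing T]
      [IsAdicComplete (maximalIdeal T) T] (F : H →ₐ[C] T),
      add T F (neg T F) = (Algebra.ofId C T).comp ε)
    (hnat : ∀ (T T' : Type u) [CommRing T] [IsLocalRing T] [Algebra C T] [IsNoetherianRing T]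
      [IsAdicComplete (maximalIdeal T) T] [CommRing T'] [IsLocalRing T'] [Algebra C T']
      [IsNoetherianRing T'] [IsAdicComplete (maximalIdeal T') T']
      (φ : T →ₐ[C] T') (F G : H →ₐ[C] T),
      φ.comp (add T F G) = add T' (φ.comp F) (φ.comp G))
    (hnegnat : ∀ (T T' : Type u) [CommRing T] [IsLocalRing T] [Algebra C T]
      [IsNoetherianRing T] [IsAdicComplete (maximalIdeal T) T] [CommRing T'] [IsLocalRing T']
      [Algebra C T'] [IsNoetherianRing T'] [IsAdicComplete (maximalIdeal T') T']
      (φ : T →ₐ[C] T') (F : H →ₐ[C] T), φ.comp (neg T F) = neg T' (φ.comp F))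
    -- Frobenius is injective on `S = R̂`
    (hFrob : Function.Injective (fun s : S => s ^ p))
    -- `R₀` is (the image in `S = R̂` of) the ring `R`, so that `R₀ ∩ S^{p^k} = R₀^{p^k}`
    (R₀ : Subalgebra C S)
    (hR₀ : ∀ (k : ℕ) (x : S), x ∈ R₀ → (∃ s : S, x = s ^ p ^ k) →
      ∃ r ∈ R₀, x = r ^ p ^ k)
    -- the `A`-compatible sequence, with values in `R₀`
    (F : ℕ → (H →ₐ[C] S))
    (hFR₀ : ∀ (m : ℕ) (h : H), F m h ∈ R₀)
    (hFloc : ∀ (m : ℕ), ∀ h ∈ maximalIdeal H, F m h ∈ maximalIdeal S)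
    (hcompat : ∀ (m : ℕ) (h : H), ∃ s : S,
      (add S (F (m + 1)) (neg S (F m))) h = s ^ p ^ (m + 1))
    -- the limit `G` of the sequence
    (G : H →ₐ[C] S)
    (hlim : ∀ (m : ℕ) (h : H), G h - F m h ∈
      Ideal.span ((fun s : S => s ^ p ^ m) '' (maximalIdeal S : Set S))) :
    -- `G` is the 0-map iff each `f_k` takes values in `p^{k+1}`-th powers (of `R₀`)
    (∀ h : H, G h ∈ Set.range (algebraMap C S)) ↔
      ∀ (k : ℕ) (h : H), ∃ r ∈ R₀, F k h = r ^ p ^ (k + 1) := by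
  have hp : 1 < p := (Fact.out : p.Prime).one_lt
  let law : PointGroupLaw C H ε := ⟨add, neg, hcomm, hassoc, hzero, hneg, hnat, hnegnat⟩
  have hlim' : ∀ m h, G h - F m h ∈ maximalIdeal S ^ p ^ m :=
    fun m h => Ideal.span_pow_image_le _ _ (hlim m h)
  constructor
  · intro hG k h
    have hG0 := AlgHom.apply_eq_algebraMap_counit_of_mem_range (ε := ε) hFloc
      (fun h => by simpa using hlim' 0 h) hG
    have hF : ∀ m h, F m h - algebraMap C S (ε h) ∈ maximalIdeal S ^ p ^ m := fun m h => by
      rw [← hG0, ← neg_sub]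
      exact neg_mem (hlim' m h)
    obtain ⟨s, hs⟩ :=
      law.exists_eq_pow_of_forall_sub_mem_pow hp hresS.surjective hFrob F hcompat hF k h
    exact hR₀ (k + 1) (F k h) (hFR₀ k h) ⟨s, hs⟩
  · intro hpow h
    refine ⟨ε h, (AlgHom.apply_eq_algebraMap_counit_of_forall_eq_pow hp hFloc hlim' ?_ h).symm⟩
    intro k h
    obtain ⟨r, -, hr⟩ := hpow k h
    exact ⟨r ^ p, by rw [hr, pow_succ', pow_mul]⟩

/-- Let `(f_m : T → R)` be an `A`-compatible sequence with limit
`F : T̂ → R̂`.  Then `F` is the 0-map iff `f_k(T) ⊆ R^{p^{k+1}}` for all `k`.  Here `A` is a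
commutative algebraic group over a perfect field `C` of characteristic `p > 0`; the
completion `T̂` of `T = O_{A,0}` is the complete Hopf algebra `H` (with its group structure
`add`/`neg` on points, identity the counit `ε`), `S = R̂` is the completion of the Noetherian
local `C`-algebra `R` (with residue field `C`, Frobenius injective), realized as the
subalgebra `R₀ ⊆ S` satisfying `R₀ ∩ S^{p^k} = R₀^{p^k}`, the sequence takes values in `R₀`,
and `G = lim f_m`.  The 0-map is the composition of the residue map with the structure map,
i.e. the map with image `C`. -/
theorem stmt15
    (C : Type u) [Field C] (p : ℕ) [Fact p.Prime] [CharP C p] [PerfectRing C p]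
    (H : Type u) [CommRing H] [Algebra C H] [IsLocalRing H] [IsNoetherianRing H]
    [IsAdicComplete (maximalIdeal H) H]
    (hresH : Function.Bijective (algebraMap C (ResidueField H)))
    (S : Type u) [CommRing S] [Algebra C S] [IsLocalRing S] [IsNoetherianRing S]
    [IsAdicComplete (maximalIdeal S) S] [ExpChar S p]
    (hresS : Function.Bijective (algebraMap C (ResidueField S)))
    -- the counit of `H` (the residue map)
    (ε : H →ₐ[C] C) (hε : ∀ h ∈ maximalIdeal H, ε h = 0)
    -- the group structure on points of the complete Hopf algebra `H`
    (add : ∀ (T : Type u) [CommRing T] [IsLocalRing T] [Algebra C T] [IsNoetherianRing T]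
      [IsAdicComplete (maximalIdeal T) T],
      (H →ₐ[C] T) → (H →ₐ[C] T) → (H →ₐ[C] T))
    (neg : ∀ (T : Type u) [CommRing T] [IsLocalRing T] [Algebra C T] [IsNoetherianRing T]
      [IsAdicComplete (maximalIdeal T) T],
      (H →ₐ[C] T) → (H →ₐ[C] T))
    (hcomm : ∀ (T : Type u) [CommRing T] [IsLocalRing T] [Algebra C T] [IsNoetherianRing T]
      [IsAdicComplete (maximalIdeal T) T] (F G : H →ₐ[C] T), add T F G = add T G F)
    (hassoc : ∀ (T : Type u) [CommRing T] [IsLocalRing T] [Algebra C T] [IsNoetherianRing T]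
      [IsAdicComplete (maximalIdeal T) T] (F G K : H →ₐ[C] T),
      add T (add T F G) K = add T F (add T G K))
    (hzero : ∀ (T : Type u) [CommRing T] [IsLocalRing T] [Algebra C T] [IsNoetherianRing T]
      [IsAdicComplete (maximalIdeal T) T] (F : H →ₐ[C] T),
      add T F ((Algebra.ofId C T).comp ε) = F)
    (hneg : ∀ (T : Type u) [CommRing T] [IsLocalRing T] [Algebra C T] [IsNoetherianRing T]
      [IsAdicComplete (maximalIdeal T) T] (F : H →ₐ[C] T),
      add T F (neg T F) = (Algebra.ofId C T).comp ε)
    (hnat : ∀ (T T' : Type u) [CommRing T] [IsLocalRing T] [Algebra C T] [IsNoetherianRing T]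
      [IsAdicComplete (maximalIdeal T) T] [CommRing T'] [IsLocalRing T'] [Algebra C T']
      [IsNoetherianRing T'] [IsAdicComplete (maximalIdeal T') T']
      (φ : T →ₐ[C] T') (F G : H →ₐ[C] T),
      φ.comp (add T F G) = add T' (φ.comp F) (φ.comp G))
    (hnegnat : ∀ (T T' : Type u) [CommRing T] [IsLocalRing T] [Algebra C T]
      [IsNoetherianRing T] [IsAdicComplete (maximalIdeal T) T] [CommRing T'] [IsLocalRing T']
      [Algebra C T'] [IsNoetherianRing T'] [IsAdicComplete (maximalIdeal T') T']
      (φ : T →ₐ[C] T') (F : H →ₐ[C] T), φ.comp (neg T F) = neg T' (φ.comp F))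
    -- Frobenius is injective on `S = R̂`
    (hFrob : Function.Injective (fun s : S => s ^ p))
    -- `R₀` is (the image in `S = R̂` of) the ring `R`, so that `R₀ ∩ S^{p^k} = R₀^{p^k}`
    (R₀ : Subalgebra C S)
    (hR₀ : ∀ (k : ℕ) (x : S), x ∈ R₀ → (∃ s : S, x = s ^ p ^ k) →
      ∃ r ∈ R₀, x = r ^ p ^ k)
    -- the `A`-compatible sequence, with values in `R₀`
    (F : ℕ → (H →ₐ[C] S))
    (hFR₀ : ∀ (m : ℕ) (h : H), F m h ∈ R₀)
    (hFloc : ∀ (m : ℕ), ∀ h ∈ maximalIdeal H, F m h ∈ maximalIdeal S)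
    (hcompat : ∀ (m : ℕ) (h : H), ∃ s : S,
      (add S (F (m + 1)) (neg S (F m))) h = s ^ p ^ (m + 1))
    -- the limit `G` of the sequence
    (G : H →ₐ[C] S)
    (hlim : ∀ (m : ℕ) (h : H), G h - F m h ∈
      Ideal.span ((fun s : S => s ^ p ^ m) '' (maximalIdeal S : Set S))) :
    -- `G` is the 0-map iff each `f_k` takes values in `p^{k+1}`-th powers (of `R₀`)
    (∀ h : H, G h ∈ Set.range (algebraMap C S)) ↔
      ∀ (k : ℕ) (h : H), ∃ r ∈ R₀, F k h = r ^ p ^ (k + 1) :=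
  stmt15_general C p H S hresS ε add neg hcomm hassoc hzero hneg hnat hnegnat hFrob R₀ hR₀ F hFR₀
    hFloc hcompat G hlim
end
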